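/- arXiv:1308.3454 — 3 statements merged into one kernel-verified Lean document; each statement's English description precedes it below -/
import Mathlib

section
/- Let a : ℕ → ℂ with a(1) = 1, let k be a positive integer, and suppose S is a set of primes such that for every p ∈ S there is a constant λ_p with a(pn) + p^{k-1}·a(n/p) = λ_p·a(n) for all n ≥ 1 (with a(n/p) = 0 if p ∤ n), and λ_p = a(p). Then a(m)a(n) = a(mn) for all coprime m, n ≥ 1 each of whose prime factors lie in S. -/
/-!
If `p ∤ n`, the Hecke relation at `p` gives the same second-order linear recursion in `j` for
`a (p ^ j * n)` and for `a (p ^ j) * a n`, with the same first two terms, so the two sequences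
agree. Multiplicativity on coprime `m, n` then follows by induction on `m` through its
decomposition into coprime prime powers.
-/

/-- For the coefficients of a `T_p`-eigenform of weight `k`, `c = p ^ (k - 1)`. -/
def HeckeRelation {R : Type*} [CommRing R] (a : ℕ → R) (p : ℕ) (c : R) : Prop :=
  ∀ n : ℕ, 1 ≤ n → a (p * n) + c * (if p ∣ n then a (n / p) else 0) = a p * a n

namespace HeckeRelation

variable {R : Type*} [CommRing R] {a : ℕ → R} {p : ℕ} {c : R}

theorem apply_mul_of_not_dvd (h : HeckeRelation a p c) {n : ℕ} (hn : 1 ≤ n) (hpn : ¬p ∣ n) :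
    a (p * n) = a p * a n := by
  simpa [hpn] using h n hn

theorem apply_pow_add_two_mul (h : HeckeRelation a p c) (hp : 0 < p) {n : ℕ} (hn : 1 ≤ n)
    (j : ℕ) :
    a (p ^ (j + 2) * n) = a p * a (p ^ (j + 1) * n) - c * a (p ^ j * n) := by
  have hpos : 1 ≤ p ^ (j + 1) * n := Nat.mul_pos (pow_pos hp _) hn
  have hdvd : p ∣ p ^ (j + 1) * n := (dvd_pow_self p j.succ_ne_zero).mul_right n
  have hdiv : p ^ (j + 1) * n / p = p ^ j * n := by
    rw [pow_succ', mul_assoc, Nat.mul_div_cancel_left _ hp]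
  have hrel := h _ hpos
  rw [if_pos hdvd, hdiv, ← mul_assoc, ← pow_succ'] at hrel
  linear_combination hrel

theorem apply_pow_mul_of_not_dvd (h : HeckeRelation a p c) (ha1 : a 1 = 1) (hp : 0 < p)
    {n : ℕ} (hn : 1 ≤ n) (hpn : ¬p ∣ n) (j : ℕ) :
    a (p ^ j * n) = a (p ^ j) * a n := by
  induction j using Nat.twoStepInduction with
  | zero => simp [ha1]
  | one => simpa using h.apply_mul_of_not_dvd hn hpn
  | more j ih₀ ih₁ =>
    have hpow := h.apply_pow_add_two_mul hp le_rfl j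
    simp only [mul_one] at hpow
    rw [h.apply_pow_add_two_mul hp hn, ih₀, ih₁, hpow]
    ring

end HeckeRelation

theorem mul_eq_of_heckeRelation {R : Type*} [CommRing R] {a : ℕ → R} (ha1 : a 1 = 1)
    {c : ℕ → R} {S : Set ℕ} (hS : ∀ p ∈ S, HeckeRelation a p (c p)) (m : ℕ) :
    ∀ n : ℕ, 1 ≤ m → 1 ≤ n → m.Coprime n → (∀ q : ℕ, q.Prime → q ∣ m → q ∈ S) →
      a m * a n = a (m * n) := by
  induction m using Nat.recOnPosPrimePosCoprime with
  | zero => intro n hm; omega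
  | one => intro n _ _ _ _; simp [ha1]
  | prime_pow p j hp hj =>
    intro n _ hn hcop hmS
    have hpm : p ∣ p ^ j := dvd_pow_self p hj.ne'
    have hpn : ¬p ∣ n := hp.coprime_iff_not_dvd.mp (hcop.coprime_dvd_left hpm)
    exact ((hS p (hmS p hp hpm)).apply_pow_mul_of_not_dvd ha1 hp.pos hn hpn j).symm
  | coprime m₁ m₂ hm₁ hm₂ hcop₁₂ ih₁ ih₂ =>
    intro n _ hn hcop hmS
    have hS₁ : ∀ q : ℕ, q.Prime → q ∣ m₁ → q ∈ S := fun q hq hd ↦ hmS q hq (hd.mul_right m₂)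
    have hS₂ : ∀ q : ℕ, q.Prime → q ∣ m₂ → q ∈ S := fun q hq hd ↦ hmS q hq (hd.mul_left m₁)
    have h₂n := ih₂ n (by omega) hn hcop.coprime_mul_left hS₂
    have h₁₂n := ih₁ (m₂ * n) (by omega) (Nat.mul_pos (by omega) hn)
      (hcop₁₂.mul_right hcop.coprime_mul_right) hS₁
    have h₁₂ := ih₁ m₂ (by omega) (by omega) hcop₁₂ hS₁
    calc a (m₁ * m₂) * a n = a m₁ * (a m₂ * a n) := by rw [← h₁₂, mul_assoc]
      _ = a (m₁ * m₂ * n) := by rw [h₂n, h₁₂n, mul_assoc]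

theorem hecke_eigen_multiplicative_general (a : ℕ → ℂ) (ha1 : a 1 = 1) (k : ℕ)
    (S : Set ℕ)
    (hHecke : ∀ p ∈ S, ∀ n : ℕ, 1 ≤ n →
      a (p * n) + (p : ℂ) ^ (k - 1) * (if p ∣ n then a (n / p) else 0) = a p * a n) :
    ∀ m n : ℕ, 1 ≤ m → 1 ≤ n → Nat.Coprime m n →
      (∀ q : ℕ, q.Prime → q ∣ m → q ∈ S) → (∀ q : ℕ, q.Prime → q ∣ n → q ∈ S) →
      a m * a n = a (m * n) := by
  intro m n hm hn hcop hmS _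
  exact mul_eq_of_heckeRelation ha1 (c := fun p ↦ (p : ℂ) ^ (k - 1)) hHecke m n hm hn hcop hmS

theorem hecke_eigen_multiplicative (a : ℕ → ℂ) (ha1 : a 1 = 1) (k : ℕ) (hk : 1 ≤ k)
    (S : Set ℕ) (hS : ∀ p ∈ S, p.Prime)
    (hHecke : ∀ p ∈ S, ∀ n : ℕ, 1 ≤ n →
      a (p * n) + (p : ℂ) ^ (k - 1) * (if p ∣ n then a (n / p) else 0) = a p * a n) :
    ∀ m n : ℕ, 1 ≤ m → 1 ≤ n → Nat.Coprime m n →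
      (∀ q : ℕ, q.Prime → q ∣ m → q ∈ S) → (∀ q : ℕ, q.Prime → q ∣ n → q ∈ S) →
      a m * a n = a (m * n) :=
  hecke_eigen_multiplicative_general a ha1 k S hHecke
end

section
/- With a_ω(n) the coefficients of Ramanujan's mock theta function ω(q), one has a_ω(16) ≡ 9 (mod 23) and a_ω(416) ≡ 9 (mod 23). Explicitly, a_ω(16) = 101 and a_ω(416) = 147019574355949. -/
/-- Coefficients of Ramanujan's mock theta function `ω(q)`:
`ω(q) = ∑_{n≥0} q^{2n(n+1)} / ∏_{j=0}^{n} (1 - q^{2j+1})²`.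
Since the `n`-th summand has order `≥ 2n(n+1) ≥ n`, the `N`-th coefficient only
receives contributions from summands with `n ≤ N`. -/
noncomputable def aOmega (N : ℕ) : ℚ :=
  PowerSeries.coeff (R := ℚ) N (∑ n ∈ Finset.range (N + 1),
    (PowerSeries.X : PowerSeries ℚ) ^ (2 * n * (n + 1)) *
      ∏ j ∈ Finset.range (n + 1),
        ((1 - (PowerSeries.X : PowerSeries ℚ) ^ (2 * j + 1))⁻¹) ^ 2)

/-!
Multiplying a power series by `(1 - X^k)⁻¹` turns its coefficient sequence `a` into the
sequence `b` with `b m = a m + b (m - k)` (the second term only when `k ≤ m`). Running this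
recursion on lists of the first `N + 1` coefficients, which are natural numbers throughout,
produces the truncations of `∏_{j<n} (1 - X^{2j+1})⁻²`, and `a_ω(N)` is a finite sum of their
entries. The two values are then checked by kernel evaluation, and the congruences are integer
arithmetic.
-/

open PowerSeries

namespace PowerSeries
variable {K : Type*} [Field K]

theorem coeff_mul_inv_one_sub_X_pow {k : ℕ} (hk : 0 < k) (f : K⟦X⟧) (m : ℕ) :
    coeff m (f * (1 - X ^ k)⁻¹) =
      coeff m f + if k ≤ m then coeff (m - k) (f * (1 - X ^ k)⁻¹) else 0 := by
  set g := f * (1 - X ^ k)⁻¹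
  have hunit : constantCoeff (1 - X ^ k : K⟦X⟧) ≠ 0 := by simp [zero_pow hk.ne']
  have hg : coeff m (g * (1 - X ^ k)) = coeff m f := by
    rw [mul_assoc, PowerSeries.inv_mul_cancel _ hunit, mul_one]
  rw [← hg, mul_sub, mul_one, map_sub, coeff_mul_X_pow']
  ring

noncomputable def coeffList (f : K⟦X⟧) (n : ℕ) : List K := (List.range n).map fun i => coeff i f

theorem length_coeffList (f : K⟦X⟧) (n : ℕ) : (coeffList f n).length = n := by
  simp [coeffList]

theorem coeffList_succ (f : K⟦X⟧) (n : ℕ) :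
    coeffList f (n + 1) = coeffList f n ++ [coeff n f] := by
  simp [coeffList, List.range_succ]

theorem getD_coeffList {f : K⟦X⟧} {n i : ℕ} (hi : i < n) :
    (coeffList f n).getD i 0 = coeff i f := by
  simp [coeffList, List.getD_eq_getElem?_getD, List.getElem?_range hi]

theorem getD_reverse_coeffList (f : K⟦X⟧) (n : ℕ) {k : ℕ} (hk : 0 < k) :
    (coeffList f n).reverse.getD (k - 1) 0 = if k ≤ n then coeff (n - k) f else 0 := by
  split_ifs with hkn
  · rw [List.getD_eq_getElem?_getD, List.getElem?_reverse (by rw [length_coeffList]; omega),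
      length_coeffList, ← List.getD_eq_getElem?_getD, getD_coeffList (by omega),
      show n - 1 - (k - 1) = n - k by omega]
  · exact List.getD_eq_default _ _ (by rw [List.length_reverse, length_coeffList]; omega)

end PowerSeries

namespace CoeffList

/-- `acc` holds the quotient coefficients computed so far, latest first, so the one `k` places
back is `acc.getD (k - 1) 0`. -/
def divStep (k : ℕ) (acc : List ℕ) (a : ℕ) : List ℕ := (a + acc.getD (k - 1) 0) :: acc

def divOneSubXPow (k : ℕ) (l : List ℕ) : List ℕ := (l.foldl (divStep k) []).reverse

theorem divOneSubXPow_append (k : ℕ) (l : List ℕ) (a : ℕ) :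
    divOneSubXPow k (l ++ [a]) =
      divOneSubXPow k l ++ [a + (divOneSubXPow k l).reverse.getD (k - 1) 0] := by
  simp [divOneSubXPow, List.foldl_append, divStep]

theorem cast_getD {R : Type*} [AddMonoidWithOne R] (l : List ℕ) (i : ℕ) :
    ((l.getD i 0 : ℕ) : R) = (l.map (↑)).getD i 0 := by
  simpa using (List.getD_map l 0 (Nat.cast : ℕ → R)).symm

variable {K : Type*} [Field K]

theorem map_divOneSubXPow {k : ℕ} (hk : 0 < k) {f : K⟦X⟧} {l : List ℕ} {n : ℕ}
    (hl : l.map (↑) = coeffList f n) :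
    (divOneSubXPow k l).map (↑) = coeffList (f * (1 - X ^ k)⁻¹) n := by
  obtain rfl : l.length = n := by simpa [length_coeffList] using congrArg List.length hl
  induction l using List.reverseRecOn with
  | nil => rfl
  | append_singleton l a ih =>
    rw [List.length_append, List.length_singleton, coeffList_succ, List.map_append] at hl
    obtain ⟨hl, hlast⟩ := List.append_inj' hl (by simp)
    have ha : (a : K) = coeff l.length f := List.singleton_inj.mp hlast
    have hnext : ((a + (divOneSubXPow k l).reverse.getD (k - 1) 0 : ℕ) : K) =
        coeff l.length (f * (1 - X ^ k)⁻¹) := by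
      rw [coeff_mul_inv_one_sub_X_pow hk f l.length, Nat.cast_add, ha, cast_getD,
        List.map_reverse, ih hl, getD_reverse_coeffList _ _ hk]
    rw [divOneSubXPow_append, List.map_append, ih hl, List.map_singleton, hnext,
      List.length_append, List.length_singleton, coeffList_succ]

end CoeffList

namespace MockTheta
open CoeffList

noncomputable def oddProd (n : ℕ) : ℚ⟦X⟧ := ∏ j ∈ Finset.range n, ((1 - X ^ (2 * j + 1))⁻¹) ^ 2

def oddProdList (N : ℕ) : ℕ → List ℕ
  | 0 => 1 :: List.replicate N 0
  | n + 1 => divOneSubXPow (2 * n + 1) (divOneSubXPow (2 * n + 1) (oddProdList N n))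

theorem map_oddProdList_zero (N : ℕ) :
    (oddProdList N 0).map (↑) = coeffList (oddProd 0) (N + 1) := by
  induction N with
  | zero => simp [oddProdList, oddProd, coeffList]
  | succ N ih =>
    rw [coeffList_succ, ← ih]
    simp [oddProdList, oddProd, List.replicate_succ']

theorem map_oddProdList (N n : ℕ) : (oddProdList N n).map (↑) = coeffList (oddProd n) (N + 1) := by
  induction n with
  | zero => exact map_oddProdList_zero N
  | succ n ih =>
    rw [oddProd, Finset.prod_range_succ, sq, ← mul_assoc]
    exact map_divOneSubXPow (by omega) (map_divOneSubXPow (by omega) ih)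

def omegaCoeff (N : ℕ) : ℕ :=
  ∑ n ∈ Finset.range (N + 1),
    if 2 * n * (n + 1) ≤ N then (oddProdList N (n + 1)).getD (N - 2 * n * (n + 1)) 0 else 0

theorem aOmega_eq_omegaCoeff (N : ℕ) : aOmega N = omegaCoeff N := by
  rw [aOmega, map_sum, omegaCoeff, Nat.cast_sum]
  refine Finset.sum_congr rfl fun n _ => ?_
  rw [← oddProd, coeff_X_pow_mul', Nat.cast_ite]
  split_ifs
  · rw [cast_getD, map_oddProdList, getD_coeffList (by omega)]
  · rfl

end MockTheta

set_option maxRecDepth 10000 in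
theorem aOmega_congruences_mod_23 :
    aOmega 16 = 101 ∧ aOmega 416 = 147019574355949 ∧
    (101 : ℤ) ≡ 9 [ZMOD (23 : ℤ)] ∧ (147019574355949 : ℤ) ≡ 9 [ZMOD (23 : ℤ)] := by
  refine ⟨?_, ?_, by decide, by decide⟩
  · rw [MockTheta.aOmega_eq_omegaCoeff, show MockTheta.omegaCoeff 16 = 101 by decide]
    norm_num
  · rw [MockTheta.aOmega_eq_omegaCoeff, show MockTheta.omegaCoeff 416 = 147019574355949 by decide]
    norm_num
end

section
/- Let a : ℕ → ℤ, k ≥ 1, ℓ a prime, R ≥ 1, and p a prime with p ∤ ℓ such that a(1) = 1 and a(pn) + p^{k-1}·a(n/p) ≡ 0 (mod ℓ^R) for all n ≥ 1 (with a(n/p) = 0 when p ∤ n). Then for all m ≥ 0, a(p^{2m+1}) ≡ 0 (mod ℓ^R) and a(p^{2m}) ≡ (-p^{k-1})^m (mod ℓ^R). -/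
/-!
Applying the Hecke relation at `n = 1` gives `a(p) ≡ 0`, and at `n = p^(j+1)` gives the recurrence
`a(p^(j+2)) ≡ -p^(k-1) a(p^j)`. Iterating the recurrence from `a(1) = 1` and `a(p) ≡ 0` yields both claims.
-/

theorem Int.ModEq.pow_mul_of_add_two {n c : ℤ} {b : ℕ → ℤ}
    (hrec : ∀ j, b (j + 2) ≡ c * b j [ZMOD n]) (m j : ℕ) :
    b (2 * m + j) ≡ c ^ m * b j [ZMOD n] := by
  induction m with
  | zero => simp
  | succ m ih =>
    calc b (2 * (m + 1) + j) = b (2 * m + j + 2) := by ring_nf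
      _ ≡ c * b (2 * m + j) [ZMOD n] := hrec _
      _ ≡ c * (c ^ m * b j) [ZMOD n] := ih.mul_left c
      _ = c ^ (m + 1) * b j := by ring

section Hecke

variable {a : ℕ → ℤ} {k p : ℕ} {N : ℤ}

theorem hecke_apply_prime (hp : p.Prime)
    (hHecke : ∀ n : ℕ, 1 ≤ n →
      a (p * n) + (p : ℤ) ^ (k - 1) * (if p ∣ n then a (n / p) else 0) ≡ 0 [ZMOD N]) :
    a p ≡ 0 [ZMOD N] := by
  simpa [Nat.dvd_one, hp.ne_one] using hHecke 1 le_rfl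

theorem hecke_apply_prime_pow_add_two (hp : p.Prime)
    (hHecke : ∀ n : ℕ, 1 ≤ n →
      a (p * n) + (p : ℤ) ^ (k - 1) * (if p ∣ n then a (n / p) else 0) ≡ 0 [ZMOD N])
    (j : ℕ) :
    a (p ^ (j + 2)) ≡ -(p : ℤ) ^ (k - 1) * a (p ^ j) [ZMOD N] := by
  have h := hHecke (p ^ (j + 1)) (Nat.one_le_pow _ _ hp.pos)
  rw [if_pos (dvd_pow_self p j.succ_ne_zero), ← pow_succ', pow_succ p j,
    Nat.mul_div_cancel _ hp.pos] at h
  simpa [neg_mul] using h.add_right (-((p : ℤ) ^ (k - 1) * a (p ^ j)))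

end Hecke

theorem hecke_vanishing_prime_powers_mod_general (a : ℕ → ℤ) (ha1 : a 1 = 1) (k : ℕ)
    (ℓ : ℕ) (R : ℕ)
    (p : ℕ) (hp : p.Prime)
    (hHecke : ∀ n : ℕ, 1 ≤ n →
      a (p * n) + (p : ℤ) ^ (k - 1) * (if p ∣ n then a (n / p) else 0) ≡ 0
        [ZMOD (ℓ : ℤ) ^ R]) :
    ∀ m : ℕ, a (p ^ (2 * m + 1)) ≡ 0 [ZMOD (ℓ : ℤ) ^ R] ∧
      a (p ^ (2 * m)) ≡ (-(p : ℤ) ^ (k - 1)) ^ m [ZMOD (ℓ : ℤ) ^ R] := by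
  intro m
  have iterate := Int.ModEq.pow_mul_of_add_two (b := fun j => a (p ^ j))
    (hecke_apply_prime_pow_add_two hp hHecke) m
  constructor
  · calc a (p ^ (2 * m + 1)) ≡ (-(p : ℤ) ^ (k - 1)) ^ m * a (p ^ 1) [ZMOD (ℓ : ℤ) ^ R] :=
          iterate 1
      _ ≡ (-(p : ℤ) ^ (k - 1)) ^ m * 0 [ZMOD (ℓ : ℤ) ^ R] :=
          (pow_one p ▸ hecke_apply_prime hp hHecke).mul_left _
      _ = 0 := mul_zero _
  · simpa [ha1] using iterate 0

theorem hecke_vanishing_prime_powers_mod (a : ℕ → ℤ) (ha1 : a 1 = 1) (k : ℕ) (hk : 1 ≤ k)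
    (ℓ : ℕ) (hℓ : ℓ.Prime) (R : ℕ) (hR : 1 ≤ R)
    (p : ℕ) (hp : p.Prime) (hpℓ : p ≠ ℓ)
    (hHecke : ∀ n : ℕ, 1 ≤ n →
      a (p * n) + (p : ℤ) ^ (k - 1) * (if p ∣ n then a (n / p) else 0) ≡ 0
        [ZMOD (ℓ : ℤ) ^ R]) :
    ∀ m : ℕ, a (p ^ (2 * m + 1)) ≡ 0 [ZMOD (ℓ : ℤ) ^ R] ∧
      a (p ^ (2 * m)) ≡ (-(p : ℤ) ^ (k - 1)) ^ m [ZMOD (ℓ : ℤ) ^ R] :=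
  hecke_vanishing_prime_powers_mod_general a ha1 k ℓ R p hp hHecke
end
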